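/- arXiv:2208.12404 — 5 statements merged into one kernel-verified Lean document; each statement's English description precedes it below -/
import Mathlib

section
/- Let F be a field and A, B ∈ SL(2,F) with tr(A·B·A⁻¹·B⁻¹) = 1. Then the element g = A·B·A⁻¹·B⁻¹·A satisfies tr(g) = 0, tr(g·B) = 0, and tr(g·B·A) = 0. -/
/-!
In `SL(2, R)` the adjugate formula `g⁻¹ = tr g • 1 - g` gives `tr g⁻¹ = tr g` and the Fricke
identity `tr (c * g) + tr (c * g⁻¹) = tr c * tr g`. For the commutator `c = A B A⁻¹ B⁻¹` and each
of `g = A, A B, A B A`, the element `c * g⁻¹` is conjugate to `g⁻¹`, so `tr (c * g⁻¹) = tr g`;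
with `tr c = 1` the Fricke identity then forces `tr (c * g) = 0`.
-/

open Matrix

open scoped MatrixGroups

namespace Matrix

theorem adjugate_fin_two_eq_trace_smul_sub {R : Type*} [CommRing R]
    (M : Matrix (Fin 2) (Fin 2) R) : adjugate M = trace M • 1 - M := by
  ext i j
  fin_cases i <;> fin_cases j <;> simp [adjugate_fin_two, trace_fin_two]

namespace SpecialLinearGroup

section Conj

variable {n R : Type*} [Fintype n] [DecidableEq n] [CommRing R]

theorem trace_coe_conj (g h : SpecialLinearGroup n R) :
    trace ((g * h * g⁻¹ : SpecialLinearGroup n R) : Matrix n n R) = trace (h : Matrix n n R) := by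
  rw [coe_mul, coe_mul, trace_mul_cycle, ← coe_mul, inv_mul_cancel, coe_one, Matrix.one_mul]

end Conj

section FinTwo

variable {R : Type*} [CommRing R]

theorem coe_inv_fin_two (g : SL(2, R)) :
    ((g⁻¹ : SL(2, R)) : Matrix (Fin 2) (Fin 2) R) =
      trace (g : Matrix (Fin 2) (Fin 2) R) • 1 - g := by
  rw [coe_inv, adjugate_fin_two_eq_trace_smul_sub]

theorem trace_inv_fin_two (g : SL(2, R)) :
    trace ((g⁻¹ : SL(2, R)) : Matrix (Fin 2) (Fin 2) R) = trace (g : Matrix (Fin 2) (Fin 2) R) := by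
  rw [coe_inv_fin_two, trace_sub, trace_smul, trace_one]
  simp only [Fintype.card_fin, Nat.cast_ofNat, smul_eq_mul]
  ring

theorem trace_mul_add_trace_mul_inv_fin_two (c g : SL(2, R)) :
    trace ((c * g : SL(2, R)) : Matrix (Fin 2) (Fin 2) R) +
        trace ((c * g⁻¹ : SL(2, R)) : Matrix (Fin 2) (Fin 2) R) =
      trace (c : Matrix (Fin 2) (Fin 2) R) * trace (g : Matrix (Fin 2) (Fin 2) R) := by
  rw [coe_mul, coe_mul, coe_inv_fin_two, Matrix.mul_sub, Matrix.mul_smul, Matrix.mul_one,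
    trace_sub, trace_smul, smul_eq_mul]
  ring

theorem trace_mul_eq_zero_of_trace_eq_one {c g : SL(2, R)}
    (hc : trace (c : Matrix (Fin 2) (Fin 2) R) = 1)
    (hg : trace ((c * g⁻¹ : SL(2, R)) : Matrix (Fin 2) (Fin 2) R) =
      trace (g : Matrix (Fin 2) (Fin 2) R)) :
    trace ((c * g : SL(2, R)) : Matrix (Fin 2) (Fin 2) R) = 0 := by
  have fricke := trace_mul_add_trace_mul_inv_fin_two c g
  rw [hc, hg, one_mul] at fricke
  exact add_eq_right.mp fricke

end FinTwo

end SpecialLinearGroup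

end Matrix

theorem involutions_from_comm_trace_one {F : Type*} [Field F]
    (A B : Matrix.SpecialLinearGroup (Fin 2) F)
    (h : Matrix.trace ((A * B * A⁻¹ * B⁻¹ : Matrix.SpecialLinearGroup (Fin 2) F) :
      Matrix (Fin 2) (Fin 2) F) = 1) :
    Matrix.trace ((A * B * A⁻¹ * B⁻¹ * A : Matrix.SpecialLinearGroup (Fin 2) F) :
      Matrix (Fin 2) (Fin 2) F) = 0 ∧
    Matrix.trace ((A * B * A⁻¹ * B⁻¹ * A * B : Matrix.SpecialLinearGroup (Fin 2) F) :
      Matrix (Fin 2) (Fin 2) F) = 0 ∧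
    Matrix.trace ((A * B * A⁻¹ * B⁻¹ * A * B * A : Matrix.SpecialLinearGroup (Fin 2) F) :
      Matrix (Fin 2) (Fin 2) F) = 0 := by
  have conj_A : A * B * A⁻¹ * B⁻¹ * A⁻¹ = (A * B) * A⁻¹ * (A * B)⁻¹ := by group
  have conj_AB : A * B * A⁻¹ * B⁻¹ * (A * B)⁻¹ =
      (A * B * A⁻¹) * (A * B)⁻¹ * (A * B * A⁻¹)⁻¹ := by group
  have conj_ABA : A * B * A⁻¹ * B⁻¹ * (A * B * A)⁻¹ =
      (A * B) * (A * B * A)⁻¹ * (A * B)⁻¹ := by group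
  set c := A * B * A⁻¹ * B⁻¹
  refine ⟨?_, ?_, ?_⟩
  · apply SpecialLinearGroup.trace_mul_eq_zero_of_trace_eq_one h
    rw [conj_A, SpecialLinearGroup.trace_coe_conj, SpecialLinearGroup.trace_inv_fin_two]
  · rw [mul_assoc c]
    apply SpecialLinearGroup.trace_mul_eq_zero_of_trace_eq_one h
    rw [conj_AB, SpecialLinearGroup.trace_coe_conj, SpecialLinearGroup.trace_inv_fin_two]
  · rw [mul_assoc c, mul_assoc c]
    apply SpecialLinearGroup.trace_mul_eq_zero_of_trace_eq_one h
    rw [conj_ABA, SpecialLinearGroup.trace_coe_conj, SpecialLinearGroup.trace_inv_fin_two]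
end

section
/- Let F be a field and A, B ∈ SL(2,F), and suppose t = tr(A·B·A⁻¹·B⁻¹) satisfies t² − t − 1 = 0. Then the element g = (A·B·A⁻¹·B⁻¹)²·A satisfies tr(g) = tr(A)·(t² − t − 1) = 0. -/
/-!
By Cayley–Hamilton, `C² = t C - 1` for the commutator `C` of trace `t`, so
`tr (C² A) = t · tr (C A) - tr A`. The Fricke identity
`tr (C A) + tr (C A⁻¹) = tr C · tr A` together with `tr (C A⁻¹) = tr A⁻¹ = tr A`
(the matrix `C A⁻¹` is conjugate to `A⁻¹` by `A B`) gives
`tr (C A) = (t - 1) tr A`, hence `tr (C² A) = tr A · (t² - t - 1)`.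
-/

open Matrix

open scoped MatrixGroups

local notation:1024 "↑ₘ" A:1024 => Subtype.val (A : SL(2, _))

theorem Matrix.adjugate_fin_two_eq_trace_smul_sub_s11 {R : Type*} [CommRing R]
    (M : Matrix (Fin 2) (Fin 2) R) : adjugate M = trace M • 1 - M := by
  rw [adjugate_fin_two, trace_fin_two]
  ext i j
  fin_cases i <;> fin_cases j <;> simp

namespace Matrix.SpecialLinearGroup

variable {R : Type*} [CommRing R] (X Y : SL(2, R))

theorem coe_inv_fin_two_s11 : ↑ₘ(X⁻¹) = trace ↑ₘX • 1 - X := by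
  rw [coe_inv, adjugate_fin_two_eq_trace_smul_sub_s11]

theorem trace_inv_fin_two_s11 : trace ↑ₘ(X⁻¹) = trace ↑ₘX := by
  rw [coe_inv_fin_two_s11, trace_sub, trace_smul, trace_one, Fintype.card_fin, smul_eq_mul]
  ring

theorem sq_fin_two : ↑ₘ(X ^ 2) = trace ↑ₘX • ↑ₘX - 1 := by
  have hinv : ↑ₘX * ↑ₘ(X⁻¹) = 1 := by
    rw [← coe_mul, mul_inv_cancel, coe_one]
  rw [coe_inv_fin_two_s11, Matrix.mul_sub, Matrix.mul_smul, Matrix.mul_one] at hinv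
  rw [coe_pow, sq]
  linear_combination (norm := noncomm_ring) -hinv

theorem trace_conj (Z : SL(2, R)) : trace ↑ₘ(Z * X * Z⁻¹) = trace ↑ₘX := by
  rw [coe_mul, coe_mul, trace_mul_cycle, ← coe_mul, inv_mul_cancel, coe_one, Matrix.one_mul]

theorem trace_mul_add_trace_mul_inv_fin_two_s11 :
    trace ↑ₘ(X * Y) + trace ↑ₘ(X * Y⁻¹) = trace ↑ₘX * trace ↑ₘY := by
  rw [coe_mul, coe_mul, coe_inv_fin_two_s11, ← trace_add, ← Matrix.mul_add, add_sub_cancel,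
    Matrix.mul_smul, Matrix.mul_one, trace_smul, smul_eq_mul, mul_comm]

theorem trace_sq_mul_fin_two :
    trace ↑ₘ(X ^ 2 * Y) = trace ↑ₘX * trace ↑ₘ(X * Y) - trace ↑ₘY := by
  rw [coe_mul, sq_fin_two, Matrix.sub_mul, Matrix.one_mul, Matrix.smul_mul, trace_sub, trace_smul,
    smul_eq_mul, coe_mul]

end Matrix.SpecialLinearGroup

theorem trace_comm_sq_mul {F : Type*} [Field F]
    (A B : Matrix.SpecialLinearGroup (Fin 2) F) (t : F)
    (ht : t = Matrix.trace ((A * B * A⁻¹ * B⁻¹ : Matrix.SpecialLinearGroup (Fin 2) F) :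
      Matrix (Fin 2) (Fin 2) F))
    (hq : t ^ 2 - t - 1 = 0) :
    Matrix.trace (((A * B * A⁻¹ * B⁻¹) ^ 2 * A : Matrix.SpecialLinearGroup (Fin 2) F) :
      Matrix (Fin 2) (Fin 2) F) =
      Matrix.trace ((A : Matrix.SpecialLinearGroup (Fin 2) F) : Matrix (Fin 2) (Fin 2) F) *
        (t ^ 2 - t - 1) ∧
    Matrix.trace (((A * B * A⁻¹ * B⁻¹) ^ 2 * A : Matrix.SpecialLinearGroup (Fin 2) F) :
      Matrix (Fin 2) (Fin 2) F) = 0 := by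
  open SpecialLinearGroup in
  set C := A * B * A⁻¹ * B⁻¹
  have hCA_inv : trace ↑ₘ(C * A⁻¹) = trace ↑ₘA := by
    rw [show C * A⁻¹ = A * B * A⁻¹ * (A * B)⁻¹ by simp only [C]; group,
      SpecialLinearGroup.trace_conj, trace_inv_fin_two_s11]
  have hCA : trace ↑ₘ(C * A) = (t - 1) * trace ↑ₘA := by
    linear_combination trace_mul_add_trace_mul_inv_fin_two_s11 C A - hCA_inv - trace ↑ₘA * ht
  have hmain : trace ↑ₘ(C ^ 2 * A) = trace ↑ₘA * (t ^ 2 - t - 1) := by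
    rw [trace_sq_mul_fin_two, hCA, ← ht]
    ring
  exact ⟨hmain, by rw [hmain, hq, mul_zero]⟩
end

section
/- Let F be a field and A, B ∈ SL(2,F), and set s = tr(A·B·A·B⁻¹) and suppose tr(A) = 1 and s² − s − 1 = 0. Then tr(A²·B·A·B⁻¹·A·B·A·B⁻¹) = s² − s − 1 = 0. -/
/-!
Write `C = A B A B⁻¹`. The word is conjugate to `C² A`, and in `SL(2)` Cayley–Hamilton gives
`tr (Y² X) = tr Y · tr (Y X) - tr X`. Applied to `Y = C, X = A` this yields `s · tr (C A) - 1`;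
applied to `A C = A² (B A B⁻¹)` it yields `tr (C A) = tr (A C) = s - 1`, hence `s² - s - 1`.
-/

open Matrix

namespace Matrix

theorem mul_self_eq_trace_smul_sub_one_of_det_eq_one {R : Type*} [CommRing R]
    {M : Matrix (Fin 2) (Fin 2) R} (hM : M.det = 1) : M * M = M.trace • M - 1 := by
  rw [det_fin_two] at hM
  ext i j
  fin_cases i <;> fin_cases j <;> simp [mul_apply, trace_fin_two] <;> grind

theorem trace_mul_self_mul_of_det_eq_one {R : Type*} [CommRing R]
    {Y : Matrix (Fin 2) (Fin 2) R} (hY : Y.det = 1) (X : Matrix (Fin 2) (Fin 2) R) :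
    trace (Y * Y * X) = trace Y * trace (Y * X) - trace X := by
  rw [mul_self_eq_trace_smul_sub_one_of_det_eq_one hY, sub_mul, smul_mul_assoc, one_mul,
    trace_sub, trace_smul, smul_eq_mul]

namespace SpecialLinearGroup

variable {n : Type*} [DecidableEq n] [Fintype n] {R : Type*} [CommRing R]

theorem trace_coe_mul_comm (X Y : SpecialLinearGroup n R) :
    trace ((X * Y : SpecialLinearGroup n R) : Matrix n n R) =
      trace ((Y * X : SpecialLinearGroup n R) : Matrix n n R) := by
  simp only [coe_mul]
  exact Matrix.trace_mul_comm _ _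

theorem trace_coe_mul_self_mul (Y X : SpecialLinearGroup (Fin 2) R) :
    trace ((Y * Y * X : SpecialLinearGroup (Fin 2) R) : Matrix (Fin 2) (Fin 2) R) =
      trace (Y : Matrix (Fin 2) (Fin 2) R) *
          trace ((Y * X : SpecialLinearGroup (Fin 2) R) : Matrix (Fin 2) (Fin 2) R) -
        trace (X : Matrix (Fin 2) (Fin 2) R) := by
  simp only [coe_mul]
  exact trace_mul_self_mul_of_det_eq_one Y.prop X

end SpecialLinearGroup

end Matrix

open Matrix.SpecialLinearGroup in
theorem trace_A2BABABAB {F : Type*} [Field F]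
    (A B : Matrix.SpecialLinearGroup (Fin 2) F) (s : F)
    (hs : s = Matrix.trace ((A * B * A * B⁻¹ : Matrix.SpecialLinearGroup (Fin 2) F) :
      Matrix (Fin 2) (Fin 2) F))
    (hA : Matrix.trace ((A : Matrix.SpecialLinearGroup (Fin 2) F) :
      Matrix (Fin 2) (Fin 2) F) = 1)
    (hq : s ^ 2 - s - 1 = 0) :
    Matrix.trace ((A ^ 2 * B * A * B⁻¹ * A * B * A * B⁻¹ : Matrix.SpecialLinearGroup (Fin 2) F) :
      Matrix (Fin 2) (Fin 2) F) = s ^ 2 - s - 1 ∧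
    Matrix.trace ((A ^ 2 * B * A * B⁻¹ * A * B * A * B⁻¹ : Matrix.SpecialLinearGroup (Fin 2) F) :
      Matrix (Fin 2) (Fin 2) F) = 0 := by
  set C := A * B * A * B⁻¹ with hC
  have hconj : trace ((B * A * B⁻¹ : SpecialLinearGroup (Fin 2) F) : Matrix (Fin 2) (Fin 2) F) =
      1 := by
    rw [trace_coe_mul_comm, show B⁻¹ * (B * A) = A by group, hA]
  have hCA : trace ((C * A : SpecialLinearGroup (Fin 2) F) : Matrix (Fin 2) (Fin 2) F) =
      s - 1 := by
    rw [trace_coe_mul_comm, show A * C = A * A * (B * A * B⁻¹) by rw [hC]; group,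
      trace_coe_mul_self_mul, hA, hconj, show A * (B * A * B⁻¹) = C by rw [hC]; group, ← hs,
      one_mul]
  have htrace : trace ((A ^ 2 * B * A * B⁻¹ * A * B * A * B⁻¹ : SpecialLinearGroup (Fin 2) F) :
      Matrix (Fin 2) (Fin 2) F) = s ^ 2 - s - 1 := by
    rw [show A ^ 2 * B * A * B⁻¹ * A * B * A * B⁻¹ = A * (C * C) by rw [hC, sq]; group,
      trace_coe_mul_comm, trace_coe_mul_self_mul, ← hs, hCA, hA]
    ring
  exact ⟨htrace, htrace.trans hq⟩
end

section
/- If x and y are two elements of the symmetric group S₄ that generate S₄ and have the same order, then both x and y have order 4. -/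
/-!
Every element of `S₄` has order at most 4. If the common order is odd, `x` and `y` are even
permutations and generate at most `A₄`. If it is 2, two involutions generate a dihedral group of
order `2 * orderOf (x * y) ≤ 8 < 24`. So the common order is 4.
-/

open Equiv Equiv.Perm Subgroup
open scoped Pointwise

/-- `x` inverts `x * y` under conjugation, so `⟨x, y⟩ = ⟨x⟩ * ⟨x * y⟩` is dihedral. -/
theorem Subgroup.nat_card_closure_pair_le_of_sq_eq_one {G : Type*} [Group G] [Finite G]
    {x y : G} (hx : x ^ 2 = 1) (hy : y ^ 2 = 1) :
    Nat.card (closure {x, y}) ≤ 2 * orderOf (x * y) := by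
  have hx_inv : x⁻¹ = x := inv_eq_of_mul_eq_one_right (by rw [← sq, hx])
  have hy_inv : y⁻¹ = y := inv_eq_of_mul_eq_one_right (by rw [← sq, hy])
  have hconj : x * (x * y) * x⁻¹ = (x * y)⁻¹ := by
    rw [mul_inv_rev, hx_inv, hy_inv, ← mul_assoc, ← sq, hx, one_mul]
  have hnorm : zpowers x ≤ normalizer (zpowers (x * y) : Set G) := by
    rw [zpowers_le, mem_normalizer_iff_map_conj_eq, MonoidHom.map_zpowers]
    exact (congrArg zpowers hconj).trans zpowers_inv
  have hle : closure {x, y} ≤ zpowers x ⊔ zpowers (x * y) := by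
    rw [closure_le]
    rintro g (rfl | rfl)
    · exact mem_sup_left (mem_zpowers g)
    · have := mul_mem (mem_sup_left (inv_mem (mem_zpowers x)))
        (mem_sup_right (mem_zpowers (x * g)))
      rwa [inv_mul_cancel_left] at this
  calc Nat.card (closure {x, y}) ≤ Nat.card (zpowers x ⊔ zpowers (x * y) : Subgroup G) :=
        card_le_of_le hle
    _ = Nat.card ((zpowers x : Set G) * (zpowers (x * y) : Set G)) := by
        rw [← coe_mul_of_left_le_normalizer_right _ _ hnorm]; rfl
    _ ≤ Nat.card (zpowers x) * Nat.card (zpowers (x * y)) := Set.natCard_mul_le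
    _ ≤ 2 * orderOf (x * y) := by
        rw [Nat.card_zpowers, Nat.card_zpowers]
        gcongr
        exact orderOf_le_of_pow_eq_one two_pos hx

theorem Equiv.Perm.sign_eq_one_of_odd_orderOf {α : Type*} [Fintype α] [DecidableEq α]
    {g : Perm α} (hg : Odd (orderOf g)) : sign g = 1 := by
  have := congrArg sign (pow_orderOf_eq_one g)
  rwa [map_pow, Int.units_pow_eq_pow_mod_two, Nat.odd_iff.mp hg, pow_one, map_one] at this

theorem Equiv.Perm.closure_le_alternatingGroup_of_odd_orderOf {α : Type*} [Fintype α]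
    [DecidableEq α] {s : Set (Perm α)} (hs : ∀ g ∈ s, Odd (orderOf g)) :
    closure s ≤ alternatingGroup α :=
  (closure_le _).2 fun g hg ↦ mem_alternatingGroup.2 (sign_eq_one_of_odd_orderOf (hs g hg))

theorem alternatingGroup_ne_top (α : Type*) [Fintype α] [DecidableEq α] [Nontrivial α] :
    alternatingGroup α ≠ ⊤ := fun h ↦ by
  simpa [h] using alternatingGroup.index_eq_two (α := α)

set_option maxRecDepth 20000 in
theorem Equiv.Perm.pow_four_eq_one_or_pow_three_eq_one_of_fin_four (g : Perm (Fin 4)) :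
    g ^ 4 = 1 ∨ g ^ 3 = 1 := by
  revert g; decide

theorem Equiv.Perm.orderOf_le_four_of_fin_four (g : Perm (Fin 4)) : orderOf g ≤ 4 := by
  rcases pow_four_eq_one_or_pow_three_eq_one_of_fin_four g with h | h
  · exact orderOf_le_of_pow_eq_one four_pos h
  · exact (orderOf_le_of_pow_eq_one three_pos h).trans (by norm_num)

theorem gen_pair_S4_same_order (x y : Equiv.Perm (Fin 4))
    (hgen : Subgroup.closure {x, y} = ⊤)
    (hord : orderOf x = orderOf y) :
    orderOf x = 4 ∧ orderOf y = 4 := by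
  suffices h4 : orderOf x = 4 from ⟨h4, hord ▸ h4⟩
  have hpos := orderOf_pos x
  have hle := orderOf_le_four_of_fin_four x
  have hcases : Odd (orderOf x) ∨ orderOf x = 2 ∨ orderOf x = 4 := by
    interval_cases orderOf x <;> decide
  rcases hcases with hodd | htwo | h4
  · refine absurd (top_le_iff.1 ?_) (alternatingGroup_ne_top (Fin 4))
    rw [← hgen]
    exact closure_le_alternatingGroup_of_odd_orderOf <| by
      rintro g (rfl | rfl)
      exacts [hodd, hord ▸ hodd]
  · have hcard := nat_card_closure_pair_le_of_sq_eq_one (htwo ▸ pow_orderOf_eq_one x)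
      (htwo ▸ hord ▸ pow_orderOf_eq_one y)
    rw [hgen, card_top, Nat.card_perm, Nat.card_fin, show Nat.factorial 4 = 24 from rfl] at hcard
    have := orderOf_le_four_of_fin_four (x * y)
    omega
  · exact h4
end

section
/- If x and y are two elements of the alternating group A₅ that generate A₅ and have the same order n, then n = 3 or n = 5. -/
/-!
Two elements of order dividing 2 both invert their product `x * y` by conjugation, so they
normalize the cyclic group it generates. In a simple group this cyclic subgroup is trivial or
everything, and either way a group generated by two such elements is cyclic. Since `A₅` is simple
but not cyclic, the common order `n` cannot divide 2; every element of `A₅` has order 1, 2, 3 or 5.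
-/

open Subgroup

section TwoInvolutions

variable {G : Type*} [Group G]

theorem inv_eq_self_of_sq_eq_one {x : G} (hx : x ^ 2 = 1) : x⁻¹ = x :=
  inv_eq_of_mul_eq_one_right (by rwa [← sq])

theorem mem_normalizer_zpowers_of_conj_eq_inv {g z : G} (h : g * z * g⁻¹ = z⁻¹) :
    g ∈ normalizer (zpowers z : Set G) := by
  rw [mem_normalizer_iff_map_conj_eq, MonoidHom.map_zpowers]
  exact (congrArg zpowers h).trans zpowers_inv

theorem closure_pair_le_normalizer_zpowers_mul {x y : G} (hx : x ^ 2 = 1) (hy : y ^ 2 = 1) :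
    closure {x, y} ≤ normalizer (zpowers (x * y) : Set G) := by
  rw [closure_le, Set.insert_subset_iff, Set.singleton_subset_iff]
  constructor <;> apply mem_normalizer_zpowers_of_conj_eq_inv
  · rw [mul_inv_rev, inv_eq_self_of_sq_eq_one hy, ← mul_assoc, ← sq, hx, one_mul]
  · rw [mul_inv_rev, inv_eq_self_of_sq_eq_one hx, inv_eq_self_of_sq_eq_one hy, mul_assoc,
      mul_assoc, ← sq, hy, mul_one]

theorem isCyclic_of_closure_pair_eq_top_of_sq_eq_one [IsSimpleGroup G] {x y : G}
    (hgen : closure {x, y} = ⊤) (hx : x ^ 2 = 1) (hy : y ^ 2 = 1) : IsCyclic G := by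
  have hnormal : (zpowers (x * y)).Normal := normalizer_eq_top_iff.mp <|
    top_le_iff.mp (hgen ▸ closure_pair_le_normalizer_zpowers_mul hx hy)
  rw [isCyclic_iff_exists_zpowers_eq_top]
  rcases hnormal.eq_bot_or_eq_top with hbot | htop
  · have hyx : y = x :=
      (eq_inv_of_mul_eq_one_right (zpowers_eq_bot.mp hbot)).trans (inv_eq_self_of_sq_eq_one hx)
    exact ⟨x, by rwa [hyx, Set.pair_eq_singleton, ← zpowers_eq_closure] at hgen⟩
  · exact ⟨x * y, htop⟩

end TwoInvolutions

namespace alternatingGroup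

set_option maxRecDepth 10000 in
theorem fin_five_pow_eq_one (g : alternatingGroup (Fin 5)) :
    g ^ 2 = 1 ∨ g ^ 3 = 1 ∨ g ^ 5 = 1 := by
  revert g
  decide

theorem orderOf_fin_five (g : alternatingGroup (Fin 5)) :
    orderOf g ∣ 2 ∨ orderOf g = 3 ∨ orderOf g = 5 := by
  rcases fin_five_pow_eq_one g with h2 | h3 | h5
  · exact .inl (orderOf_dvd_of_pow_eq_one h2)
  · rcases (Nat.dvd_prime Nat.prime_three).mp (orderOf_dvd_of_pow_eq_one h3) with h | h
    · exact .inl (h ▸ one_dvd 2)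
    · exact .inr (.inl h)
  · rcases (Nat.dvd_prime Nat.prime_five).mp (orderOf_dvd_of_pow_eq_one h5) with h | h
    · exact .inl (h ▸ one_dvd 2)
    · exact .inr (.inr h)

theorem not_isCyclic_fin_five : ¬IsCyclic (alternatingGroup (Fin 5)) := by
  intro _
  obtain ⟨g, hg⟩ := IsCyclic.exists_ofOrder_eq_natCard (α := alternatingGroup (Fin 5))
  rw [nat_card_alternatingGroup, Nat.card_fin] at hg
  have h60 : orderOf g = 60 := by rw [hg]; decide
  rcases orderOf_fin_five g with h | h | h
  · exact absurd (Nat.le_of_dvd two_pos h) (by omega)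
  all_goals omega

end alternatingGroup

theorem gen_pair_A5_same_order (x y : alternatingGroup (Fin 5))
    (hgen : Subgroup.closure {x, y} = ⊤)
    (n : ℕ) (hx : orderOf x = n) (hy : orderOf y = n) :
    n = 3 ∨ n = 5 := by
  rcases alternatingGroup.orderOf_fin_five x with h2 | h3 | h5
  · have : IsSimpleGroup (alternatingGroup (Fin 5)) := alternatingGroup.isSimpleGroup (by simp)
    refine absurd (isCyclic_of_closure_pair_eq_top_of_sq_eq_one hgen ?_ ?_)
      alternatingGroup.not_isCyclic_fin_five
    · exact orderOf_dvd_iff_pow_eq_one.mp h2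
    · exact orderOf_dvd_iff_pow_eq_one.mp (hy ▸ hx ▸ h2)
  · exact .inl (hx ▸ h3)
  · exact .inr (hx ▸ h5)
end
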